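/- arXiv:1905.10019 — 2 statements merged into one kernel-verified Lean document; each statement's English description precedes it below -/
import Mathlib

section
/- Let s < η < e be integers with min(η − s, e − η) ≥ c₁δ for some c₁ > 0 and δ > 0. Suppose F_l = F for l = s,…,η and F_l = G for l = η+1,…,e, with sup_z|F(z) − G(z)| = κ > 0, and the counts satisfy n_min ≤ n_t ≤ n_max for all t. Then max_{s < t < e} Δ_{s,e}^t ≥ c₁ κ δ n_min / (2 √((e − s) n_max)). -/
open Finset

/-!
At the true change point `t = η` both segment means are pure, `F` on the left and `G` on
the right, so `Δ_{s,e}^η(z) = √(N₁N₂/(N₁+N₂)) · |F z - G z|` with `N₁ = n_{s:η}`,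
`N₂ = n_{(η+1):e}`, and the supremum over `z` is `√(N₁N₂/(N₁+N₂)) · κ`. Each segment holds at
least `c₁δ` indices, so `N₁, N₂ ≥ c₁δ n_min`, while `N₁ + N₂ ≤ (e - s + 1) n_max ≤ 2(e - s) n_max`;
hence `N₁N₂/(N₁+N₂) ≥ (c₁δ n_min)² / (2(e - s) n_max)`.
-/

/-- The population CUSUM statistic `Δ_{s,e}^t(z)`, before taking absolute values. -/
noncomputable def cusum (n : ℕ → ℕ) (Fl : ℕ → ℝ → ℝ) (s t e : ℕ) (z : ℝ) : ℝ :=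
  Real.sqrt ((∑ l ∈ Icc s t, (n l : ℝ)) * (∑ l ∈ Icc (t + 1) e, (n l : ℝ)) /
      (∑ l ∈ Icc s e, (n l : ℝ))) *
    ((∑ l ∈ Icc s t, (n l : ℝ) * Fl l z) / (∑ l ∈ Icc s t, (n l : ℝ)) -
      (∑ l ∈ Icc (t + 1) e, (n l : ℝ) * Fl l z) / (∑ l ∈ Icc (t + 1) e, (n l : ℝ)))

theorem sum_Icc_eq_sum_Icc_add_sum_Icc_succ {M : Type*} [AddCommMonoid M] (f : ℕ → M)
    {s t e : ℕ} (hst : s ≤ t + 1) (hte : t ≤ e) :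
    ∑ l ∈ Icc s e, f l = ∑ l ∈ Icc s t, f l + ∑ l ∈ Icc (t + 1) e, f l := by
  rw [← sum_union (disjoint_left.2 fun l h₁ h₂ => by simp only [mem_Icc] at h₁ h₂; omega)]
  congr 1
  ext l
  simp only [mem_union, mem_Icc]
  omega

theorem weighted_mean_eq_of_eqOn {ι : Type*} (S : Finset ι) (w f : ι → ℝ) {c : ℝ}
    (hf : ∀ i ∈ S, f i = c) (hw : ∑ i ∈ S, w i ≠ 0) :
    (∑ i ∈ S, w i * f i) / ∑ i ∈ S, w i = c := by
  rw [sum_congr rfl fun i hi => by rw [hf i hi], ← sum_mul, mul_div_cancel_left₀ _ hw]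

theorem cast_card_Icc (a b : ℕ) (h : a ≤ b + 1) : ((#(Icc a b) : ℕ) : ℝ) = b + 1 - a := by
  rw [Nat.card_Icc, Nat.cast_sub h]
  push_cast
  ring

theorem mul_le_sum_Icc {n : ℕ → ℕ} {m : ℕ} (hm : ∀ l, m ≤ n l) {a b : ℕ} (h : a ≤ b + 1) :
    ((b : ℝ) + 1 - a) * m ≤ ∑ l ∈ Icc a b, (n l : ℝ) := by
  rw [← cast_card_Icc a b h, ← nsmul_eq_mul]
  exact card_nsmul_le_sum _ _ _ fun l _ => Nat.cast_le.2 (hm l)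

theorem sum_Icc_le_mul {n : ℕ → ℕ} {m : ℕ} (hm : ∀ l, n l ≤ m) {a b : ℕ} (h : a ≤ b + 1) :
    ∑ l ∈ Icc a b, (n l : ℝ) ≤ ((b : ℝ) + 1 - a) * m := by
  rw [← cast_card_Icc a b h, ← nsmul_eq_mul]
  exact sum_le_card_nsmul _ _ _ fun l _ => Nat.cast_le.2 (hm l)

theorem abs_cusum_of_change_point {n : ℕ → ℕ} (hn : ∀ l, 0 < n l) {Fl : ℕ → ℝ → ℝ}
    {F G : ℝ → ℝ} {s η e : ℕ} (hsη : s ≤ η) (hηe : η < e)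
    (hF : ∀ l, s ≤ l → l ≤ η → Fl l = F) (hG : ∀ l, η < l → l ≤ e → Fl l = G) (z : ℝ) :
    |cusum n Fl s η e z| =
      Real.sqrt ((∑ l ∈ Icc s η, (n l : ℝ)) * (∑ l ∈ Icc (η + 1) e, (n l : ℝ)) /
        (∑ l ∈ Icc s e, (n l : ℝ))) * |F z - G z| := by
  have hpos : ∀ a b, a ≤ b → 0 < ∑ l ∈ Icc a b, (n l : ℝ) := fun a b hab =>
    sum_pos (fun l _ => Nat.cast_pos.2 (hn l)) ⟨a, left_mem_Icc.2 hab⟩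
  have hmeanF := weighted_mean_eq_of_eqOn (Icc s η) (fun l => (n l : ℝ)) (Fl · z)
    (fun l hl => by rw [hF l (mem_Icc.1 hl).1 (mem_Icc.1 hl).2]) (hpos s η hsη).ne'
  have hmeanG := weighted_mean_eq_of_eqOn (Icc (η + 1) e) (fun l => (n l : ℝ)) (Fl · z)
    (fun l hl => by rw [hG l (mem_Icc.1 hl).1 (mem_Icc.1 hl).2]) (hpos (η + 1) e hηe).ne'
  rw [cusum, hmeanF, hmeanG, abs_mul, abs_of_nonneg (Real.sqrt_nonneg _)]

theorem div_two_sqrt_le_sqrt_mul_div_add {a x y b : ℝ} (ha : 0 ≤ a) (hax : a ≤ x) (hay : a ≤ y)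
    (hxy : 0 < x + y) (hb : x + y ≤ 2 * b) :
    a / (2 * Real.sqrt b) ≤ Real.sqrt (x * y / (x + y)) := by
  have hb0 : 0 < b := by linarith
  have hx : 0 ≤ x := ha.trans hax
  have hy : 0 ≤ y := ha.trans hay
  have hsq : (2 * Real.sqrt b) ^ 2 = 4 * b := by
    rw [mul_pow, Real.sq_sqrt hb0.le]
    norm_num
  rw [Real.le_sqrt (by positivity) (by positivity), div_pow, hsq,
    div_le_div_iff₀ (by positivity) hxy]
  have hxy' : a ^ 2 ≤ x * y := by nlinarith
  nlinarith

theorem stmt_4_general (s η e nmin nmax : ℕ) (δ c1 κ : ℝ) (n : ℕ → ℕ)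
    (Fl : ℕ → ℝ → ℝ) (F G : ℝ → ℝ)
    (hsη : s < η) (hηe : η < e)
    (hδ : 0 < δ) (hc1 : 0 < c1)
    (hnmin : 0 < nmin) (hb : ∀ t, nmin ≤ n t ∧ n t ≤ nmax)
    (hκ : (⨆ z : ℝ, |F z - G z|) = κ) (hκpos : 0 < κ)
    (hgap1 : c1 * δ ≤ (η : ℝ) - s) (hgap2 : c1 * δ ≤ (e : ℝ) - η)
    (hF : ∀ l, s ≤ l → l ≤ η → Fl l = F)
    (hG : ∀ l, η < l → l ≤ e → Fl l = G) :
    ∃ t, s < t ∧ t < e ∧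
      c1 * κ * δ * nmin / (2 * Real.sqrt (((e : ℝ) - s) * nmax)) ≤
      (⨆ z : ℝ, |Real.sqrt ((∑ l ∈ Finset.Icc s t, (n l : ℝ)) *
          (∑ l ∈ Finset.Icc (t + 1) e, (n l : ℝ)) /
          (∑ l ∈ Finset.Icc s e, (n l : ℝ))) *
        ((∑ l ∈ Finset.Icc s t, (n l : ℝ) * Fl l z) / (∑ l ∈ Finset.Icc s t, (n l : ℝ)) -
         (∑ l ∈ Finset.Icc (t + 1) e, (n l : ℝ) * Fl l z) /
           (∑ l ∈ Finset.Icc (t + 1) e, (n l : ℝ)))|) := by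
  refine ⟨η, hsη, hηe, ?_⟩
  change _ ≤ ⨆ z, |cusum n Fl s η e z|
  have hnmin' : (0 : ℝ) < nmin := Nat.cast_pos.2 hnmin
  have hA : 0 < c1 * δ * nmin := by positivity
  have hN₁ : c1 * δ * nmin ≤ ∑ l ∈ Icc s η, (n l : ℝ) :=
    (mul_le_mul_of_nonneg_right (by linarith) hnmin'.le).trans
      (mul_le_sum_Icc (fun l => (hb l).1) (by omega))
  have hN₂ : c1 * δ * nmin ≤ ∑ l ∈ Icc (η + 1) e, (n l : ℝ) :=
    (mul_le_mul_of_nonneg_right (by push_cast; linarith) hnmin'.le).trans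
      (mul_le_sum_Icc (fun l => (hb l).1) (by omega))
  have hN : ∑ l ∈ Icc s e, (n l : ℝ) ≤ 2 * (((e : ℝ) - s) * nmax) := by
    have hes : (s : ℝ) + 1 ≤ e := by exact_mod_cast hsη.trans hηe
    nlinarith [sum_Icc_le_mul (fun l => (hb l).2) (show s ≤ e + 1 by omega),
      (Nat.cast_nonneg nmax : (0 : ℝ) ≤ nmax)]
  rw [iSup_congr (abs_cusum_of_change_point (fun l => hnmin.trans_le (hb l).1) hsη.le hηe hF hG),
    ← Real.mul_iSup_of_nonneg (Real.sqrt_nonneg _), hκ]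
  rw [sum_Icc_eq_sum_Icc_add_sum_Icc_succ _ (Nat.le_succ_of_le hsη.le) hηe.le] at hN ⊢
  calc c1 * κ * δ * nmin / (2 * Real.sqrt (((e : ℝ) - s) * nmax))
      = κ * (c1 * δ * nmin / (2 * Real.sqrt (((e : ℝ) - s) * nmax))) := by ring
    _ ≤ κ * Real.sqrt ((∑ l ∈ Icc s η, (n l : ℝ)) * (∑ l ∈ Icc (η + 1) e, (n l : ℝ)) /
          ((∑ l ∈ Icc s η, (n l : ℝ)) + ∑ l ∈ Icc (η + 1) e, (n l : ℝ))) :=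
      mul_le_mul_of_nonneg_left
        (div_two_sqrt_le_sqrt_mul_div_add hA.le hN₁ hN₂ (by linarith) hN) hκpos.le
    _ = _ := mul_comm _ _

/-- Lower bound for the maximal population CUSUM statistic when a single change point
`η` is well inside `(s,e)`: `max_{s<t<e} Δ_{s,e}^t ≥ c₁ κ δ n_min / (2√((e−s) n_max))`. -/
theorem stmt_4 (s η e nmin nmax : ℕ) (δ c1 κ : ℝ) (n : ℕ → ℕ)
    (Fl : ℕ → ℝ → ℝ) (F G : ℝ → ℝ)
    (hsη : s < η) (hηe : η < e)
    (hδ : 0 < δ) (hc1 : 0 < c1)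
    (hnmin : 0 < nmin) (hb : ∀ t, nmin ≤ n t ∧ n t ≤ nmax)
    (hFb : ∀ z, F z ∈ Set.Icc (0 : ℝ) 1) (hGb : ∀ z, G z ∈ Set.Icc (0 : ℝ) 1)
    (hκ : (⨆ z : ℝ, |F z - G z|) = κ) (hκpos : 0 < κ)
    (hgap1 : c1 * δ ≤ (η : ℝ) - s) (hgap2 : c1 * δ ≤ (e : ℝ) - η)
    (hF : ∀ l, s ≤ l → l ≤ η → Fl l = F)
    (hG : ∀ l, η < l → l ≤ e → Fl l = G) :
    ∃ t, s < t ∧ t < e ∧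
      c1 * κ * δ * nmin / (2 * Real.sqrt (((e : ℝ) - s) * nmax)) ≤
      (⨆ z : ℝ, |Real.sqrt ((∑ l ∈ Finset.Icc s t, (n l : ℝ)) *
          (∑ l ∈ Finset.Icc (t + 1) e, (n l : ℝ)) /
          (∑ l ∈ Finset.Icc s e, (n l : ℝ))) *
        ((∑ l ∈ Finset.Icc s t, (n l : ℝ) * Fl l z) / (∑ l ∈ Finset.Icc s t, (n l : ℝ)) -
         (∑ l ∈ Finset.Icc (t + 1) e, (n l : ℝ) * Fl l z) /
           (∑ l ∈ Finset.Icc (t + 1) e, (n l : ℝ)))|) :=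
  stmt_4_general s η e nmin nmax δ c1 κ n Fl F G hsη hηe hδ hc1 hnmin hb hκ hκpos hgap1 hgap2 hF hG
end

section
/- Fix z ∈ ℝ and real numbers r_1,…,r_n (thought of as r_l = F_{t(l)}(z) for an expanded time series). For 1 ≤ l < n define the CUSUM value C_l = √((n−l)/(nl)) Σ_{t=1}^{l} r_t − √(l/(n(n−l))) Σ_{t=l+1}^{n} r_t. If the sequence (r_l) is piecewise constant with change points at positions c_1 < … < c_J, then the maximum of |C_l| over l ∈ {1,…,n−1} is attained at some l ∈ {c_1,…,c_J}; that is, max_{1≤l≤n−1} |C_l| = max_{j=1,…,J} |C_{c_j}|. -/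
open Finset

noncomputable def CuF (nn : ℕ) (r : ℕ → ℝ) (l : ℕ) : ℝ :=
  Real.sqrt (((nn : ℝ) - l) / ((nn : ℝ) * l)) * (∑ t ∈ Finset.Icc 1 l, r t) -
    Real.sqrt ((l : ℝ) / ((nn : ℝ) * ((nn : ℝ) - l))) * (∑ t ∈ Finset.Icc (l + 1) nn, r t)

lemma core_pos (γ β u u1 u2 : ℝ) (hu1 : 0 < u1) (h12 : u1 ≤ u) (h2 : u ≤ u2)
    (hγ : 0 ≤ γ) :
    |γ / u + β * u| ≤ max |γ / u1 + β * u1| |γ / u2 + β * u2| := by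
  have hu : 0 < u := hu1.trans_le h12
  have hu2 : 0 < u2 := hu.trans_le h2
  have key1 : γ / u + β * u ≤ max (γ / u1 + β * u1) (γ / u2 + β * u2) := by
    rcases le_or_gt (γ / u + β * u) (γ / u1 + β * u1) with h | h
    · exact le_max_of_le_left h
    · refine le_max_of_le_right ?_
      have h1lt : u1 < u := by
        rcases eq_or_lt_of_le h12 with rfl | h'
        · exact absurd h (lt_irrefl _)
        · exact h'
      rw [div_add' _ _ _ hu1.ne', div_add' _ _ _ hu.ne', div_lt_div_iff₀ hu1 hu] at h
      have hb : γ < β * (u * u1) := by nlinarith [sub_pos.2 h1lt]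
      have hβ : 0 < β := by nlinarith [mul_pos hu hu1]
      have hbb : γ ≤ β * (u * u2) := by
        nlinarith [mul_le_mul_of_nonneg_left h2 hβ.le, mul_pos hu hu1]
      rw [div_add' _ _ _ hu.ne', div_add' _ _ _ hu2.ne', div_le_div_iff₀ hu hu2]
      nlinarith [mul_nonneg (sub_nonneg.2 h2) (sub_nonneg.2 hbb)]
  have key2 : -(γ / u + β * u) ≤ max |γ / u1 + β * u1| |γ / u2 + β * u2| := by
    rcases le_total 0 β with hβ | hβ
    · have : 0 ≤ γ / u + β * u := by positivity
      linarith [le_max_left |γ / u1 + β * u1| |γ / u2 + β * u2|, abs_nonneg (γ / u1 + β * u1)]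
    · refine le_max_of_le_right ?_
      refine le_trans ?_ (neg_le_abs _)
      have hA : γ / u2 ≤ γ / u := div_le_div_of_nonneg_left hγ hu h2
      have hB : -(β * u) ≤ -(β * u2) := by nlinarith
      linarith
  have key1' : γ / u + β * u ≤ max |γ / u1 + β * u1| |γ / u2 + β * u2| :=
    key1.trans (max_le_max (le_abs_self _) (le_abs_self _))
  rcases abs_cases (γ / u + β * u) with ⟨he, _⟩ | ⟨he, _⟩ <;> rw [he]
  · exact key1'
  · exact key2

lemma core (γ β u u1 u2 : ℝ) (hu1 : 0 < u1) (h12 : u1 ≤ u) (h2 : u ≤ u2) :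
    |γ / u + β * u| ≤ max |γ / u1 + β * u1| |γ / u2 + β * u2| := by
  rcases le_total 0 γ with hγ | hγ
  · exact core_pos γ β u u1 u2 hu1 h12 h2 hγ
  · have h := core_pos (-γ) (-β) u u1 u2 hu1 h12 h2 (by linarith)
    simp only [neg_div, neg_mul, ← neg_add, abs_neg] at h
    exact h

lemma sqrt_id (n x : ℝ) (hx : 0 < x) (hxn : x < n) :
    x * Real.sqrt ((n - x) / (n * x)) = (n - x) * Real.sqrt (x / (n * (n - x))) := by
  have hn : 0 < n := hx.trans hxn
  have h1 : x * Real.sqrt ((n - x) / (n * x)) = Real.sqrt (x ^ 2 * ((n - x) / (n * x))) := by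
    rw [Real.sqrt_mul (sq_nonneg x), Real.sqrt_sq hx.le]
  have h2 : (n - x) * Real.sqrt (x / (n * (n - x))) =
      Real.sqrt ((n - x) ^ 2 * (x / (n * (n - x)))) := by
    rw [Real.sqrt_mul (sq_nonneg _), Real.sqrt_sq (by linarith)]
  rw [h1, h2]
  congr 1
  have h3 : n - x ≠ 0 := by linarith
  field_simp

lemma sqrt_prod (n x : ℝ) (hx : 0 < x) (hxn : x < n) :
    Real.sqrt ((n - x) / (n * x)) * Real.sqrt (x / (n * (n - x))) = 1 / n := by
  have hn : 0 < n := hx.trans hxn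
  rw [← Real.sqrt_mul (div_nonneg (by linarith) (by positivity))]
  have h3 : n - x ≠ 0 := by linarith
  have : (n - x) / (n * x) * (x / (n * (n - x))) = (1 / n) ^ 2 := by
    field_simp
  rw [this, Real.sqrt_sq (by positivity)]

lemma U_mono (n x y : ℝ) (hx : 0 ≤ x) (hxy : x ≤ y) (hyn : y < n) :
    Real.sqrt (x / (n * (n - x))) ≤ Real.sqrt (y / (n * (n - y))) := by
  have hn : 0 < n := lt_of_le_of_lt (hx.trans hxy) hyn
  apply Real.sqrt_le_sqrt
  exact div_le_div₀ (hx.trans hxy) hxy (by nlinarith) (by nlinarith)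

lemma V_anti (n x y : ℝ) (hx : 0 < x) (hxy : x ≤ y) (hyn : y ≤ n) :
    Real.sqrt ((n - y) / (n * y)) ≤ Real.sqrt ((n - x) / (n * x)) := by
  have hn : 0 < n := lt_of_lt_of_le (hx.trans_le hxy) hyn
  apply Real.sqrt_le_sqrt
  exact div_le_div₀ (by linarith) (by linarith) (by positivity) (by nlinarith)

lemma sum_seg (r : ℕ → ℝ) (a m : ℕ) (ham : a ≤ m)
    (hconst : ∀ t, a + 1 ≤ t → t ≤ m → r t = r (a + 1)) :
    (∑ t ∈ Finset.Icc 1 m, r t) = (∑ t ∈ Finset.Icc 1 a, r t) + r (a + 1) * ((m : ℝ) - a) := by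
  have e1 : ∀ k : ℕ, Finset.Icc 1 k = Finset.Ioc 0 k := by
    intro k; ext x; simp; omega
  rw [e1, e1]
  rw [← Finset.sum_Ioc_consecutive r (Nat.zero_le a) ham]
  have hc2 : ∀ t ∈ Finset.Ioc a m, r t = r (a + 1) := fun t ht => by
    rw [Finset.mem_Ioc] at ht
    exact hconst t ht.1 ht.2
  rw [Finset.sum_congr rfl hc2, Finset.sum_const, Nat.card_Ioc, nsmul_eq_mul,
    Nat.cast_sub ham]
  ring

lemma rep (nn : ℕ) (r : ℕ → ℝ) (a m : ℕ) (ham : a ≤ m) (hm1 : 1 ≤ m) (hmn : m < nn)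
    (hconst : ∀ t, a + 1 ≤ t → t ≤ m → r t = r (a + 1)) :
    CuF nn r m = ((∑ t ∈ Finset.Icc 1 a, r t) - r (a + 1) * a) *
        Real.sqrt (((nn : ℝ) - m) / ((nn : ℝ) * m)) +
      ((nn : ℝ) * r (a + 1) - (∑ t ∈ Finset.Icc 1 nn, r t) +
          ((∑ t ∈ Finset.Icc 1 a, r t) - r (a + 1) * a)) *
        Real.sqrt ((m : ℝ) / ((nn : ℝ) * ((nn : ℝ) - m))) := by
  have hT : (∑ t ∈ Finset.Icc (m + 1) nn, r t) =
      (∑ t ∈ Finset.Icc 1 nn, r t) - (∑ t ∈ Finset.Icc 1 m, r t) := by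
    have e1 : ∀ k : ℕ, Finset.Icc 1 k = Finset.Ioc 0 k := by
      intro k; ext x; simp; omega
    have e2 : Finset.Icc (m + 1) nn = Finset.Ioc m nn := by
      ext x; simp
    rw [e1, e1, e2, ← Finset.sum_Ioc_consecutive r (Nat.zero_le m) hmn.le]
    ring
  have hS := sum_seg r a m ham hconst
  have hid := sqrt_id (nn : ℝ) (m : ℝ) (by exact_mod_cast hm1) (by exact_mod_cast hmn)
  rw [CuF, hT, hS]
  linear_combination (r (a + 1)) * hid

lemma rep_div (nn : ℕ) (r : ℕ → ℝ) (a m : ℕ) (ham : a ≤ m) (hm1 : 1 ≤ m) (hmn : m < nn)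
    (hconst : ∀ t, a + 1 ≤ t → t ≤ m → r t = r (a + 1)) :
    CuF nn r m = (((∑ t ∈ Finset.Icc 1 a, r t) - r (a + 1) * a) / nn) /
        Real.sqrt ((m : ℝ) / ((nn : ℝ) * ((nn : ℝ) - m)))
      + ((nn : ℝ) * r (a + 1) - (∑ t ∈ Finset.Icc 1 nn, r t) +
          ((∑ t ∈ Finset.Icc 1 a, r t) - r (a + 1) * a)) *
        Real.sqrt ((m : ℝ) / ((nn : ℝ) * ((nn : ℝ) - m))) := by
  have hm0 : (0:ℝ) < m := by exact_mod_cast hm1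
  have hmn' : (m:ℝ) < nn := by exact_mod_cast hmn
  have hn0 : (0:ℝ) < nn := hm0.trans hmn'
  have hU : 0 < Real.sqrt ((m : ℝ) / ((nn : ℝ) * ((nn : ℝ) - m))) :=
    Real.sqrt_pos.2 (div_pos hm0 (by nlinarith))
  rw [rep nn r a m ham hm1 hmn hconst]
  congr 1
  rw [eq_div_iff hU.ne', mul_assoc, sqrt_prod (nn:ℝ) (m:ℝ) hm0 hmn']
  ring

lemma const_seg (nn : ℕ) (r : ℕ → ℝ) (cset : Finset ℕ)
    (hpc : ∀ l, 1 ≤ l → l < nn → l ∉ cset → r l = r (l + 1)) (a b : ℕ) (hbn : b ≤ nn)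
    (hfree : ∀ t, a < t → t < b → t ∉ cset) :
    ∀ t, a + 1 ≤ t → t ≤ b → r t = r (a + 1) := by
  intro t ht1
  induction t, ht1 using Nat.le_induction with
  | base => intro _; rfl
  | succ t ht ih =>
    intro ht2
    have h1 : r t = r (t + 1) := hpc t (by omega) (by omega) (hfree t (by omega) (by omega))
    rw [← h1]
    exact ih (by omega)

/-- Venkatraman's lemma: the CUSUM of a piecewise-constant sequence attains its maximum
absolute value at one of the change points of the sequence. -/
theorem stmt_17 (nn : ℕ) (hn : 2 ≤ nn) (r : ℕ → ℝ) (cset : Finset ℕ)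
    (hc : ∀ c ∈ cset, 1 ≤ c ∧ c < nn) (hne : cset.Nonempty)
    (hpc : ∀ l, 1 ≤ l → l < nn → l ∉ cset → r l = r (l + 1)) :
    let Cu : ℕ → ℝ := fun l =>
      Real.sqrt (((nn : ℝ) - l) / ((nn : ℝ) * l)) * (∑ t ∈ Finset.Icc 1 l, r t) -
        Real.sqrt ((l : ℝ) / ((nn : ℝ) * ((nn : ℝ) - l))) * (∑ t ∈ Finset.Icc (l + 1) nn, r t)
    ∃ c ∈ cset, ∀ l ∈ Finset.Icc 1 (nn - 1), |Cu l| ≤ |Cu c| := by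
  intro Cu
  have hCu : ∀ m, Cu m = CuF nn r m := fun m => rfl
  obtain ⟨c0, hc0, hmax⟩ := Finset.exists_max_image cset (fun c => |CuF nn r c|) hne
  refine ⟨c0, hc0, fun l hl => ?_⟩
  rw [Finset.mem_Icc] at hl
  have hl1 : 1 ≤ l := hl.1
  have hln : l < nn := by omega
  simp only [hCu]
  suffices h : ∃ c ∈ cset, |CuF nn r l| ≤ |CuF nn r c| by
    obtain ⟨c, hc', hle⟩ := h
    exact hle.trans (hmax c hc')
  by_cases hlc : l ∈ cset
  · exact ⟨l, hlc, le_refl _⟩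
  classical
  set F := cset.filter (fun c => c < l) with hFdef
  set G := cset.filter (fun c => l < c) with hGdef
  have hsplit : ∀ c ∈ cset, c ∈ F ∨ c ∈ G := by
    intro c hcc
    rcases lt_trichotomy c l with h | h | h
    · exact Or.inl (Finset.mem_filter.2 ⟨hcc, h⟩)
    · exact absurd (h ▸ hcc) hlc
    · exact Or.inr (Finset.mem_filter.2 ⟨hcc, h⟩)
  have hn0 : (0:ℝ) < nn := by
    have : 0 < nn := by omega
    exact_mod_cast this
  by_cases hF : F.Nonempty
  · set a := F.max' hF with hadef
    have haF : a ∈ F := F.max'_mem hF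
    have haC : a ∈ cset := (Finset.mem_filter.1 haF).1
    have hal : a < l := (Finset.mem_filter.1 haF).2
    have ha1 : 1 ≤ a := (hc a haC).1
    by_cases hG : G.Nonempty
    · -- interior segment: both endpoints are change points
      set b := G.min' hG with hbdef
      have hbG : b ∈ G := G.min'_mem hG
      have hbC : b ∈ cset := (Finset.mem_filter.1 hbG).1
      have hlb : l < b := (Finset.mem_filter.1 hbG).2
      have hbn : b < nn := (hc b hbC).2
      have hfree : ∀ t, a < t → t < b → t ∉ cset := by
        intro t h1 h2 htc
        rcases hsplit t htc with hmem | hmem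
        · have := F.le_max' t hmem
          have htl : t < l := (Finset.mem_filter.1 hmem).2
          omega
        · have := G.min'_le t hmem
          omega
      have hconst := const_seg nn r cset hpc a b hbn.le hfree
      have repA := rep_div nn r a a le_rfl ha1 (by omega) (fun t h1 h2 => hconst t h1 (by omega))
      have repL := rep_div nn r a l hal.le hl1 hln (fun t h1 h2 => hconst t h1 (by omega))
      have repB := rep_div nn r a b (by omega) (by omega) hbn (fun t h1 h2 => hconst t h1 h2)
      have hUa : 0 < Real.sqrt ((a : ℝ) / ((nn : ℝ) * ((nn : ℝ) - a))) := by
        apply Real.sqrt_pos.2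
        apply div_pos
        · exact_mod_cast (by omega : 0 < a)
        · have : (a:ℝ) < nn := by exact_mod_cast (by omega : a < nn)
          nlinarith
      have hUal : Real.sqrt ((a : ℝ) / ((nn : ℝ) * ((nn : ℝ) - a))) ≤
          Real.sqrt ((l : ℝ) / ((nn : ℝ) * ((nn : ℝ) - l))) := by
        apply U_mono <;> [positivity; exact_mod_cast hal.le; exact_mod_cast hln]
      have hUlb : Real.sqrt ((l : ℝ) / ((nn : ℝ) * ((nn : ℝ) - l))) ≤
          Real.sqrt ((b : ℝ) / ((nn : ℝ) * ((nn : ℝ) - b))) := by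
        apply U_mono <;> [positivity; exact_mod_cast hlb.le; exact_mod_cast hbn]
      have hmain := core (((∑ t ∈ Finset.Icc 1 a, r t) - r (a + 1) * a) / nn)
        ((nn : ℝ) * r (a + 1) - (∑ t ∈ Finset.Icc 1 nn, r t) +
          ((∑ t ∈ Finset.Icc 1 a, r t) - r (a + 1) * a))
        (Real.sqrt ((l : ℝ) / ((nn : ℝ) * ((nn : ℝ) - l))))
        (Real.sqrt ((a : ℝ) / ((nn : ℝ) * ((nn : ℝ) - a))))
        (Real.sqrt ((b : ℝ) / ((nn : ℝ) * ((nn : ℝ) - b)))) hUa hUal hUlb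
      rw [← repA, ← repL, ← repB] at hmain
      rcases le_max_iff.1 hmain with h | h
      · exact ⟨a, haC, h⟩
      · exact ⟨b, hbC, h⟩
    · -- no change point to the right: the right coefficient vanishes
      have hGall : ∀ c ∈ cset, c ∈ F := by
        intro c hcc
        rcases hsplit c hcc with h | h
        · exact h
        · exact absurd ⟨c, h⟩ hG
      have hfree : ∀ t, a < t → t < nn → t ∉ cset := by
        intro t h1 h2 htc
        have := F.le_max' t (hGall t htc)
        omega
      have hconst := const_seg nn r cset hpc a nn le_rfl hfree
      have repA := rep nn r a a le_rfl ha1 (by omega) (fun t h1 h2 => hconst t h1 (by omega))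
      have repL := rep nn r a l hal.le hl1 hln (fun t h1 h2 => hconst t h1 (by omega))
      have hSnn := sum_seg r a nn (by omega) hconst
      have hb0 : (nn : ℝ) * r (a + 1) - (∑ t ∈ Finset.Icc 1 nn, r t) +
          ((∑ t ∈ Finset.Icc 1 a, r t) - r (a + 1) * a) = 0 := by
        rw [hSnn]; ring
      rw [hb0, zero_mul, add_zero] at repA repL
      refine ⟨a, haC, ?_⟩
      rw [repA, repL, abs_mul, abs_mul]
      apply mul_le_mul_of_nonneg_left ?_ (abs_nonneg _)
      rw [abs_of_nonneg (Real.sqrt_nonneg _), abs_of_nonneg (Real.sqrt_nonneg _)]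
      apply V_anti
      · exact_mod_cast (by omega : 0 < a)
      · exact_mod_cast hal.le
      · exact_mod_cast hln.le
  · -- no change point to the left: the left coefficient vanishes
    have hGall : ∀ c ∈ cset, c ∈ G := by
      intro c hcc
      rcases hsplit c hcc with h | h
      · exact absurd ⟨c, h⟩ hF
      · exact h
    have hG : G.Nonempty := by
      obtain ⟨c, hcc⟩ := hne
      exact ⟨c, hGall c hcc⟩
    set b := G.min' hG with hbdef
    have hbG : b ∈ G := G.min'_mem hG
    have hbC : b ∈ cset := (Finset.mem_filter.1 hbG).1
    have hlb : l < b := (Finset.mem_filter.1 hbG).2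
    have hbn : b < nn := (hc b hbC).2
    have hfree : ∀ t, 0 < t → t < b → t ∉ cset := by
      intro t h1 h2 htc
      have := G.min'_le t (hGall t htc)
      omega
    have hconst := const_seg nn r cset hpc 0 b hbn.le hfree
    have repL := rep nn r 0 l (Nat.zero_le l) hl1 hln (fun t h1 h2 => hconst t h1 (by omega))
    have repB := rep nn r 0 b (Nat.zero_le b) (by omega) hbn (fun t h1 h2 => hconst t h1 h2)
    have ha0 : (∑ t ∈ Finset.Icc 1 0, r t) - r (0 + 1) * ((0:ℕ) : ℝ) = 0 := by simp
    rw [ha0, zero_mul, zero_add, add_zero] at repL repB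
    refine ⟨b, hbC, ?_⟩
    rw [repL, repB, abs_mul, abs_mul]
    apply mul_le_mul_of_nonneg_left ?_ (abs_nonneg _)
    rw [abs_of_nonneg (Real.sqrt_nonneg _), abs_of_nonneg (Real.sqrt_nonneg _)]
    apply U_mono
    · positivity
    · exact_mod_cast hlb.le
    · exact_mod_cast hbn
end
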